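/- arXiv:2001.06546 — 2 statements merged into one kernel-verified Lean document; each statement's English description precedes it below -/
import Mathlib

section
/- Let Y be a measurable space in which singletons are measurable, let K be a Markov kernel from Y to Y, let γ ≥ 1, δ ∈ (0,1), and let y₀, y₁, y₂ ∈ Y be three distinct points. Define the probability measures μ_δ := (1−δ)·δ_{y₀} + δ·δ_{y₁} and ν_δ := ((1−δ)/γ)·δ_{y₀} + (1 − (1−δ)/γ)·δ_{y₂}, where δ_y denotes the Dirac measure at y. Then E_γ(μ_δ‖ν_δ) = δ and E_γ(μ_δK‖ν_δK) = δ · E_{γ'}(K(y₁)‖K(y₂)), where γ' := 1 + (γ−1)/δ. Consequently, sup over probability measures μ, ν on Y with 0 < E_γ(μ‖ν) ≤ δ of E_γ(μK‖νK)/E_γ(μ‖ν) is at least sup over y₁ ≠ y₂ of E_{γ'}(K(y₁)‖K(y₂)). -/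
open MeasureTheory ProbabilityTheory Real
open scoped ENNReal

/-!
`E_γ(P‖Q) ≤ c` says exactly that `P A ≤ γ Q A + c` for every measurable `A`. Integrating this
inequality over the level sets of `x ↦ K x A` (layer cake) gives the data processing inequality
`E_γ(μK‖νK) ≤ E_γ(μ‖ν)`, which keeps the contraction ratios bounded by `1`.

In `μ_δ - γ ν_δ` the `y₀`-components cancel, so on every set it equals `δ (δ_{y₁} - γ' δ_{y₂})`,
and after applying `K` it equals `δ (K y₁ - γ' K y₂)`; taking suprema gives the two identities.
For the supremum, any pair `a ≠ b` is reached by the construction with `y₀ = a`: the pair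
`(μ_δ, ν_δ)` then has `E_γ = δ` and contraction ratio `E_{γ'}(K a‖K b)`.
-/

noncomputable def Egamma {Y : Type*} [MeasurableSpace Y] (γ : ℝ) (P Q : Measure Y) : ℝ :=
  ⨆ A : {A : Set Y // MeasurableSet A}, ((P A.1).toReal - γ * (Q A.1).toReal)

open Set in
theorem MeasureTheory.lintegral_le_mul_lintegral_add_of_forall_le {X : Type*}
    [MeasurableSpace X] {μ ν : Measure X} {c e : ℝ≥0∞}
    (h : ∀ A, MeasurableSet A → μ A ≤ c * ν A + e) {f : X → ℝ≥0∞} (hf : Measurable f)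
    (hf_le : ∀ x, f x ≤ 1) :
    ∫⁻ x, f x ∂μ ≤ c * ∫⁻ x, f x ∂ν + e := by
  have layercake (ρ : Measure X) :
      ∫⁻ x, f x ∂ρ = ∫⁻ t in Ioi 0, ρ {x | t < (f x).toReal} := by
    simp_rw [← lintegral_eq_lintegral_meas_lt ρ (.of_forall fun x => ENNReal.toReal_nonneg)
      hf.ennreal_toReal.aemeasurable,
      ENNReal.ofReal_toReal (ne_top_of_le_ne_top ENNReal.one_ne_top (hf_le _))]
  have level_le (t : ℝ) : μ {x | t < (f x).toReal} ≤
      c * ν {x | t < (f x).toReal} + (Iio 1).indicator (fun _ => e) t := by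
    rcases lt_or_ge t 1 with ht | ht
    · rw [indicator_of_mem (mem_Iio.mpr ht)]
      exact h _ (measurableSet_lt measurable_const hf.ennreal_toReal)
    · have level_empty : {x | t < (f x).toReal} = ∅ := by
        refine eq_empty_of_forall_notMem fun x (hx : t < _) => ?_
        have := ENNReal.toReal_le_of_le_ofReal zero_le_one ((hf_le x).trans ENNReal.ofReal_one.ge)
        linarith
      simp [level_empty]
  have level_measurable : Measurable fun t : ℝ => ν {x | t < (f x).toReal} :=
    Antitone.measurable fun s t hst => measure_mono fun x (hx : t < _) => hst.trans_lt hx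
  calc ∫⁻ x, f x ∂μ = ∫⁻ t in Ioi 0, μ {x | t < (f x).toReal} := layercake μ
    _ ≤ ∫⁻ t in Ioi 0, (c * ν {x | t < (f x).toReal} + (Iio 1).indicator (fun _ => e) t) :=
        lintegral_mono level_le
    _ = c * ∫⁻ x, f x ∂ν + e := by
        rw [lintegral_add_right _ (measurable_const.indicator measurableSet_Iio),
          lintegral_const_mul c level_measurable, ← layercake,
          lintegral_indicator_const measurableSet_Iio, Measure.restrict_apply measurableSet_Iio,
          Iio_inter_Ioi, Real.volume_Ioo]
        simp

section Egamma

variable {X Y : Type*} [MeasurableSpace X] [MeasurableSpace Y] {γ c : ℝ} {P Q : Measure X}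

lemma bddAbove_Egamma (hγ : 0 ≤ γ) [IsFiniteMeasure P] :
    BddAbove (Set.range fun A : {A : Set X // MeasurableSet A} =>
      (P A.1).toReal - γ * (Q A.1).toReal) := by
  refine ⟨(P Set.univ).toReal, ?_⟩
  rintro _ ⟨A, rfl⟩
  have hP := ENNReal.toReal_mono (measure_ne_top P _) (measure_mono (Set.subset_univ A.1))
  have hQ := mul_nonneg hγ (Q A.1).toReal_nonneg
  dsimp only
  linarith

lemma le_Egamma (hγ : 0 ≤ γ) [IsFiniteMeasure P] {A : Set X} (hA : MeasurableSet A) :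
    (P A).toReal - γ * (Q A).toReal ≤ Egamma γ P Q :=
  le_ciSup (bddAbove_Egamma hγ) ⟨A, hA⟩

lemma Egamma_nonneg (hγ : 0 ≤ γ) [IsFiniteMeasure P] : 0 ≤ Egamma γ P Q := by
  simpa using le_Egamma (Q := Q) hγ MeasurableSet.empty

lemma Egamma_le_iff_forall_apply_le (hγ : 0 ≤ γ) (hc : 0 ≤ c) [IsFiniteMeasure P]
    [IsFiniteMeasure Q] :
    Egamma γ P Q ≤ c ↔
      ∀ A, MeasurableSet A → P A ≤ ENNReal.ofReal γ * Q A + ENNReal.ofReal c := by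
  have : Nonempty {A : Set X // MeasurableSet A} := ⟨⟨∅, MeasurableSet.empty⟩⟩
  rw [Egamma, ciSup_le_iff (bddAbove_Egamma hγ), Subtype.forall]
  refine forall₂_congr fun A _ => ?_
  rw [← ENNReal.ofReal_toReal (measure_ne_top Q A), ← ENNReal.ofReal_mul hγ,
    ← ENNReal.ofReal_add (by positivity) hc,
    ENNReal.le_ofReal_iff_toReal_le (measure_ne_top P A) (by positivity),
    ENNReal.toReal_ofReal ENNReal.toReal_nonneg, sub_le_iff_le_add']

theorem Egamma_bind_le (hγ : 0 ≤ γ) (K : Kernel X Y) [IsMarkovKernel K]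
    [IsFiniteMeasure P] [IsFiniteMeasure Q] :
    Egamma γ (P.bind K) (Q.bind K) ≤ Egamma γ P Q := by
  have hE := Egamma_nonneg (P := P) (Q := Q) hγ
  have hPQ := (Egamma_le_iff_forall_apply_le hγ hE).mp le_rfl
  refine (Egamma_le_iff_forall_apply_le hγ hE).mpr fun A hA => ?_
  rw [Measure.bind_apply hA K.aemeasurable, Measure.bind_apply hA K.aemeasurable]
  exact lintegral_le_mul_lintegral_add_of_forall_le hPQ (K.measurable_coe hA) fun _ => prob_le_one

lemma Egamma_dirac_dirac [MeasurableSingletonClass X] (hγ : 0 ≤ γ) {x y : X} (hxy : x ≠ y) :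
    Egamma γ (Measure.dirac x) (Measure.dirac y) = 1 := by
  refine le_antisymm ((Egamma_le_iff_forall_apply_le hγ zero_le_one).mpr fun A _ => ?_) ?_
  · rw [ENNReal.ofReal_one]
    exact prob_le_one.trans le_add_self
  · simpa [hxy.symm] using le_Egamma (P := Measure.dirac x) (Q := Measure.dirac y) hγ
      (measurableSet_singleton x)

end Egamma

section Mixture

variable {X Y : Type*} [MeasurableSpace X] [MeasurableSpace Y] {a b γ δ : ℝ}

lemma toReal_ofReal_smul_add_ofReal_smul_apply (ha : 0 ≤ a) (hb : 0 ≤ b) (P R : Measure X)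
    [IsFiniteMeasure P] [IsFiniteMeasure R] (A : Set X) :
    ((ENNReal.ofReal a • P + ENNReal.ofReal b • R) A).toReal =
      a * (P A).toReal + b * (R A).toReal := by
  rw [Measure.add_apply, Measure.smul_apply, Measure.smul_apply, smul_eq_mul, smul_eq_mul,
    ENNReal.toReal_add (by finiteness) (by finiteness), ENNReal.toReal_mul, ENNReal.toReal_mul,
    ENNReal.toReal_ofReal ha, ENNReal.toReal_ofReal hb]

lemma isProbabilityMeasure_ofReal_smul_add_ofReal_smul (ha : 0 ≤ a) (hb : 0 ≤ b)
    (hab : a + b = 1) (P R : Measure X) [IsProbabilityMeasure P] [IsProbabilityMeasure R] :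
    IsProbabilityMeasure (ENNReal.ofReal a • P + ENNReal.ofReal b • R) :=
  ⟨by simp [← ENNReal.ofReal_add ha hb, hab]⟩

lemma bind_smul_dirac_add_smul_dirac (K : Kernel X Y) (r s : ℝ≥0∞) (x y : X) :
    (r • Measure.dirac x + s • Measure.dirac y).bind K = r • K x + s • K y := by
  simp [Measure.dirac_bind K.measurable]

theorem Egamma_mixture (hγ : 1 ≤ γ) (hδ0 : 0 < δ) (hδ1 : δ ≤ 1) (P₀ P₁ P₂ : Measure X)
    [IsFiniteMeasure P₀] [IsFiniteMeasure P₁] [IsFiniteMeasure P₂] :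
    Egamma γ (ENNReal.ofReal (1 - δ) • P₀ + ENNReal.ofReal δ • P₁)
        (ENNReal.ofReal ((1 - δ) / γ) • P₀ + ENNReal.ofReal (1 - (1 - δ) / γ) • P₂) =
      δ * Egamma (1 + (γ - 1) / δ) P₁ P₂ := by
  have hγ0 : 0 < γ := by linarith
  have hweight : 0 ≤ 1 - (1 - δ) / γ := sub_nonneg.mpr (div_le_one_of_le₀ (by linarith) hγ0.le)
  rw [Egamma, Egamma, Real.mul_iSup_of_nonneg hδ0.le]
  refine iSup_congr fun A => ?_
  rw [toReal_ofReal_smul_add_ofReal_smul_apply (by linarith) hδ0.le,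
    toReal_ofReal_smul_add_ofReal_smul_apply (by positivity) hweight]
  field_simp
  ring

theorem Egamma_dirac_mixture [MeasurableSingletonClass X] (hγ : 1 ≤ γ) (hδ0 : 0 < δ)
    (hδ1 : δ ≤ 1) (y₀ : X) {y₁ y₂ : X} (h12 : y₁ ≠ y₂) :
    Egamma γ
        (ENNReal.ofReal (1 - δ) • Measure.dirac y₀ + ENNReal.ofReal δ • Measure.dirac y₁)
        (ENNReal.ofReal ((1 - δ) / γ) • Measure.dirac y₀ +
          ENNReal.ofReal (1 - (1 - δ) / γ) • Measure.dirac y₂) = δ := by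
  have : 0 ≤ (γ - 1) / δ := div_nonneg (by linarith) hδ0.le
  rw [Egamma_mixture hγ hδ0 hδ1, Egamma_dirac_dirac (by linarith) h12, mul_one]

theorem Egamma_bind_dirac_mixture (K : Kernel X Y) [IsMarkovKernel K] (hγ : 1 ≤ γ)
    (hδ0 : 0 < δ) (hδ1 : δ ≤ 1) (y₀ y₁ y₂ : X) :
    Egamma γ
        ((ENNReal.ofReal (1 - δ) • Measure.dirac y₀ +
            ENNReal.ofReal δ • Measure.dirac y₁).bind K)
        ((ENNReal.ofReal ((1 - δ) / γ) • Measure.dirac y₀ +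
            ENNReal.ofReal (1 - (1 - δ) / γ) • Measure.dirac y₂).bind K) =
      δ * Egamma (1 + (γ - 1) / δ) (K y₁) (K y₂) := by
  rw [bind_smul_dirac_add_smul_dirac, bind_smul_dirac_add_smul_dirac, Egamma_mixture hγ hδ0 hδ1]

theorem iSup_Egamma_le_iSup_Egamma_bind_div [MeasurableSingletonClass X] (K : Kernel X Y)
    [IsMarkovKernel K] (hγ : 1 ≤ γ) (hδ0 : 0 < δ) (hδ1 : δ ≤ 1) :
    (⨆ q : {xx : X × X // xx.1 ≠ xx.2}, Egamma (1 + (γ - 1) / δ) (K q.1.1) (K q.1.2)) ≤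
      ⨆ p : {p : Measure X × Measure X // IsProbabilityMeasure p.1 ∧ IsProbabilityMeasure p.2 ∧
          0 < Egamma γ p.1 p.2 ∧ Egamma γ p.1 p.2 ≤ δ},
        Egamma γ (p.1.1.bind K) (p.1.2.bind K) / Egamma γ p.1.1 p.1.2 := by
  have hγ0 : 0 ≤ γ := by linarith
  rcases isEmpty_or_nonempty {xx : X × X // xx.1 ≠ xx.2} with hX | hX
  · rw [Real.iSup_of_isEmpty]
    exact Real.iSup_nonneg fun ⟨_, _, _, _⟩ =>
      div_nonneg (Egamma_nonneg hγ0) (Egamma_nonneg hγ0)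
  have hbdd : BddAbove (Set.range fun p : {p : Measure X × Measure X //
      IsProbabilityMeasure p.1 ∧ IsProbabilityMeasure p.2 ∧
        0 < Egamma γ p.1 p.2 ∧ Egamma γ p.1 p.2 ≤ δ} =>
      Egamma γ (p.1.1.bind K) (p.1.2.bind K) / Egamma γ p.1.1 p.1.2) := by
    refine ⟨1, ?_⟩
    rintro _ ⟨⟨⟨μ, ν⟩, hμ, hν, hpos, -⟩, rfl⟩
    exact (div_le_one hpos).mpr (Egamma_bind_le hγ0 K)
  refine ciSup_le fun q => ?_
  obtain ⟨⟨a, b⟩, hab : a ≠ b⟩ := q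
  have hE := Egamma_dirac_mixture hγ hδ0 hδ1 a hab
  have hweight : 0 ≤ 1 - (1 - δ) / γ :=
    sub_nonneg.mpr (div_le_one_of_le₀ (by linarith) (by linarith))
  refine le_ciSup_of_le hbdd ⟨(_, _),
    isProbabilityMeasure_ofReal_smul_add_ofReal_smul (by linarith) hδ0.le (by ring) _ _,
    isProbabilityMeasure_ofReal_smul_add_ofReal_smul (by positivity) hweight (by ring) _ _,
    hE.symm ▸ hδ0, hE.le⟩ ?_
  dsimp only
  rw [hE, Egamma_bind_dirac_mixture K hγ hδ0 hδ1, mul_div_cancel_left₀ _ hδ0.ne']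

end Mixture

theorem Egamma_dirac_construction_general {Y : Type*} [MeasurableSpace Y]
    [MeasurableSingletonClass Y]
    (K : Kernel Y Y) [IsMarkovKernel K] (γ : ℝ) (hγ : 1 ≤ γ)
    (δ : ℝ) (hδ : δ ∈ Set.Ioo (0 : ℝ) 1)
    (y₀ y₁ y₂ : Y) (h12 : y₁ ≠ y₂) :
    Egamma γ
        (ENNReal.ofReal (1 - δ) • Measure.dirac y₀ + ENNReal.ofReal δ • Measure.dirac y₁)
        (ENNReal.ofReal ((1 - δ) / γ) • Measure.dirac y₀ +
          ENNReal.ofReal (1 - (1 - δ) / γ) • Measure.dirac y₂) = δ ∧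
    Egamma γ
        ((ENNReal.ofReal (1 - δ) • Measure.dirac y₀ +
            ENNReal.ofReal δ • Measure.dirac y₁).bind K)
        ((ENNReal.ofReal ((1 - δ) / γ) • Measure.dirac y₀ +
            ENNReal.ofReal (1 - (1 - δ) / γ) • Measure.dirac y₂).bind K)
      = δ * Egamma (1 + (γ - 1) / δ) (K y₁) (K y₂) ∧
    (⨆ q : {yy : Y × Y // yy.1 ≠ yy.2}, Egamma (1 + (γ - 1) / δ) (K q.1.1) (K q.1.2)) ≤
      ⨆ p : {p : Measure Y × Measure Y // IsProbabilityMeasure p.1 ∧ IsProbabilityMeasure p.2 ∧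
          0 < Egamma γ p.1 p.2 ∧ Egamma γ p.1 p.2 ≤ δ},
        Egamma γ (p.1.1.bind K) (p.1.2.bind K) / Egamma γ p.1.1 p.1.2 := by
  obtain ⟨hδ0, hδ1⟩ := hδ
  exact ⟨Egamma_dirac_mixture hγ hδ0 hδ1.le y₀ h12,
    Egamma_bind_dirac_mixture K hγ hδ0 hδ1.le y₀ y₁ y₂,
    iSup_Egamma_le_iSup_Egamma_bind_div K hγ hδ0 hδ1.le⟩

/-- The key construction in the proof of the Dobrushin-type formula for the
contraction coefficient of the `E_γ`-divergence: for distinct `y₀, y₁, y₂` and `δ ∈ (0,1)`, the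
measures `μ_δ = (1-δ)·δ_{y₀} + δ·δ_{y₁}` and `ν_δ = ((1-δ)/γ)·δ_{y₀} + (1-(1-δ)/γ)·δ_{y₂}`
satisfy `E_γ(μ_δ‖ν_δ) = δ` and `E_γ(μ_δ K‖ν_δ K) = δ · E_{γ'}(K(y₁)‖K(y₂))` where
`γ' = 1 + (γ-1)/δ`; consequently the constrained supremum of the contraction ratio dominates
`sup_{y₁ ≠ y₂} E_{γ'}(K(y₁)‖K(y₂))`. -/
theorem Egamma_dirac_construction {Y : Type*} [MeasurableSpace Y]
    [MeasurableSingletonClass Y]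
    (K : Kernel Y Y) [IsMarkovKernel K] (γ : ℝ) (hγ : 1 ≤ γ)
    (δ : ℝ) (hδ : δ ∈ Set.Ioo (0 : ℝ) 1)
    (y₀ y₁ y₂ : Y) (h01 : y₀ ≠ y₁) (h02 : y₀ ≠ y₂) (h12 : y₁ ≠ y₂) :
    Egamma γ
        (ENNReal.ofReal (1 - δ) • Measure.dirac y₀ + ENNReal.ofReal δ • Measure.dirac y₁)
        (ENNReal.ofReal ((1 - δ) / γ) • Measure.dirac y₀ +
          ENNReal.ofReal (1 - (1 - δ) / γ) • Measure.dirac y₂) = δ ∧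
    Egamma γ
        ((ENNReal.ofReal (1 - δ) • Measure.dirac y₀ +
            ENNReal.ofReal δ • Measure.dirac y₁).bind K)
        ((ENNReal.ofReal ((1 - δ) / γ) • Measure.dirac y₀ +
            ENNReal.ofReal (1 - (1 - δ) / γ) • Measure.dirac y₂).bind K)
      = δ * Egamma (1 + (γ - 1) / δ) (K y₁) (K y₂) ∧
    (⨆ q : {yy : Y × Y // yy.1 ≠ yy.2}, Egamma (1 + (γ - 1) / δ) (K q.1.1) (K q.1.2)) ≤
      ⨆ p : {p : Measure Y × Measure Y // IsProbabilityMeasure p.1 ∧ IsProbabilityMeasure p.2 ∧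
          0 < Egamma γ p.1 p.2 ∧ Egamma γ p.1 p.2 ≤ δ},
        Egamma γ (p.1.1.bind K) (p.1.2.bind K) / Egamma γ p.1.1 p.1.2 :=
  Egamma_dirac_construction_general K γ hγ δ hδ y₀ y₁ y₂ h12
end

section
/- For every fixed γ ≥ 1, the function θ_γ(r) := Q(log γ / r − r/2) − γ·Q(log γ / r + r/2) is nondecreasing in r on (0, ∞), takes values in [0, 1], and tends to 1 as r → ∞. -/
open MeasureTheory ProbabilityTheory Real

/-- The standard Gaussian tail function `Q(t) = ∫_t^∞ (1/√(2π)) e^{-u²/2} du`. -/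
noncomputable def gaussQ (t : ℝ) : ℝ :=
  ∫ u in Set.Ioi t, (1 / Real.sqrt (2 * π)) * Real.exp (-u ^ 2 / 2)

/-- `θ_γ(r) = Q(log γ/r − r/2) − γ·Q(log γ/r + r/2)`. -/
noncomputable def thetaGamma (γ r : ℝ) : ℝ :=
  gaussQ (Real.log γ / r - r / 2) - γ * gaussQ (Real.log γ / r + r / 2)

/-! With `u = log γ / r - r / 2` and `v = u + r`, the Gaussian likelihood ratio
`φ (x - r) / φ x = exp (r x - r² / 2)` equals `γ` at `x = v`, i.e. `γ φ(v) = φ(u)`. This cancels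
the chain-rule terms and leaves `θ_γ'(r) = φ(u) > 0`. As `r → ∞`, `u → -∞` and `v → ∞`, so
`θ_γ → 1`. For `γ > 1`, both `u` and `v` tend to `+∞` as `r → 0⁺`, so `θ_γ → 0` there and
monotonicity gives `θ_γ ≥ 0`; for `γ = 1`, `θ_1(r) = Q(-r/2) - Q(r/2) ≥ 0` directly. -/

open Filter Topology Set

local notation "φ" => gaussianPDFReal 0 1

lemma gaussQ_eq_setIntegral_gaussianPDFReal (t : ℝ) : gaussQ t = ∫ u in Ioi t, φ u := by
  simp [gaussQ, gaussianPDFReal]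

lemma gaussQ_eq_one_sub_cdf (t : ℝ) : gaussQ t = 1 - cdf (gaussianReal 0 1) t := by
  have hIoi : (gaussianReal 0 1).real (Ioi t) = gaussQ t := by
    rw [measureReal_def, gaussianReal_apply_eq_integral _ one_ne_zero,
      ENNReal.toReal_ofReal (setIntegral_nonneg measurableSet_Ioi fun x _ ↦
        gaussianPDFReal_nonneg 0 1 x), gaussQ_eq_setIntegral_gaussianPDFReal]
  rw [cdf_eq_real, ← hIoi, ← compl_Iic, measureReal_compl measurableSet_Iic, probReal_univ]

lemma gaussQ_nonneg (t : ℝ) : 0 ≤ gaussQ t := by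
  rw [gaussQ_eq_one_sub_cdf]; linarith [cdf_le_one (gaussianReal 0 1) t]

lemma gaussQ_le_one (t : ℝ) : gaussQ t ≤ 1 := by
  rw [gaussQ_eq_one_sub_cdf]; linarith [cdf_nonneg (gaussianReal 0 1) t]

lemma antitone_gaussQ : Antitone gaussQ := fun s t hst ↦ by
  simp only [gaussQ_eq_one_sub_cdf]; linarith [monotone_cdf (gaussianReal 0 1) hst]

lemma tendsto_gaussQ_atTop : Tendsto gaussQ atTop (𝓝 0) := by
  simpa [funext gaussQ_eq_one_sub_cdf] using (tendsto_cdf_atTop (gaussianReal 0 1)).const_sub 1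

lemma tendsto_gaussQ_atBot : Tendsto gaussQ atBot (𝓝 1) := by
  simpa [funext gaussQ_eq_one_sub_cdf] using (tendsto_cdf_atBot (gaussianReal 0 1)).const_sub 1

lemma hasDerivAt_gaussQ (t : ℝ) : HasDerivAt gaussQ (-φ t) t := by
  have hint : Integrable φ := integrable_gaussianPDFReal 0 1
  have hprimitive : gaussQ = fun s ↦ gaussQ 0 - ∫ x in (0 : ℝ)..s, φ x := by
    ext s
    rw [← intervalIntegral.integral_Ioi_sub_Ioi' hint.integrableOn hint.integrableOn,
      gaussQ_eq_setIntegral_gaussianPDFReal, gaussQ_eq_setIntegral_gaussianPDFReal]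
    ring
  have hcont : Continuous φ := by unfold gaussianPDFReal; fun_prop
  rw [hprimitive]
  exact (intervalIntegral.integral_hasDerivAt_right hint.intervalIntegrable
    hint.aestronglyMeasurable.stronglyMeasurableAtFilter hcont.continuousAt).const_sub _

lemma gaussianPDFReal_zero_one_sub (x r : ℝ) : φ (x - r) = exp (r * x - r ^ 2 / 2) * φ x := by
  simp only [gaussianPDFReal, NNReal.coe_one, sub_zero, mul_one]
  rw [mul_left_comm, ← exp_add]
  ring_nf

lemma hasDerivAt_thetaGamma {γ r : ℝ} (hγ : 0 < γ) (hr : r ≠ 0) :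
    HasDerivAt (thetaGamma γ) (φ (log γ / r - r / 2)) r := by
  set a := log γ
  have hu : HasDerivAt (fun r ↦ a / r - r / 2) (-a / r ^ 2 - 1 / 2) r := by
    refine (((hasDerivAt_const r a).div (hasDerivAt_id r) hr).sub
      ((hasDerivAt_id r).div_const 2)).congr_deriv ?_
    simp [neg_div]
  have hv : HasDerivAt (fun r ↦ a / r + r / 2) (-a / r ^ 2 + 1 / 2) r := by
    refine (((hasDerivAt_const r a).div (hasDerivAt_id r) hr).add
      ((hasDerivAt_id r).div_const 2)).congr_deriv ?_
    simp [neg_div]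
  have hratio : γ * φ (a / r + r / 2) = φ (a / r - r / 2) := by
    have := gaussianPDFReal_zero_one_sub (a / r + r / 2) r
    rw [show r * (a / r + r / 2) - r ^ 2 / 2 = a by field_simp; ring, exp_log hγ] at this
    rw [← this]
    congr 1
    ring
  refine (((hasDerivAt_gaussQ _).comp r hu).sub
    (((hasDerivAt_gaussQ _).comp r hv).const_mul γ)).congr_deriv ?_
  linear_combination (-a / r ^ 2 + 1 / 2) * hratio

lemma strictMonoOn_thetaGamma {γ : ℝ} (hγ : 0 < γ) : StrictMonoOn (thetaGamma γ) (Ioi 0) :=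
  strictMonoOn_of_hasDerivWithinAt_pos (convex_Ioi 0)
    (fun _ hr ↦ (hasDerivAt_thetaGamma hγ (ne_of_gt hr)).continuousAt.continuousWithinAt)
    (fun _ hr ↦ (hasDerivAt_thetaGamma hγ (ne_of_gt (interior_subset hr))).hasDerivWithinAt)
    (fun _ _ ↦ gaussianPDFReal_pos 0 1 _ one_ne_zero)

lemma thetaGamma_le_one {γ : ℝ} (hγ : 0 ≤ γ) (r : ℝ) : thetaGamma γ r ≤ 1 := by
  unfold thetaGamma
  have := mul_nonneg hγ (gaussQ_nonneg (log γ / r + r / 2))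
  linarith [gaussQ_le_one (log γ / r - r / 2)]

lemma tendsto_thetaGamma_nhdsGT_zero {γ : ℝ} (hγ : 1 < γ) :
    Tendsto (thetaGamma γ) (𝓝[>] 0) (𝓝 0) := by
  have hinv : Tendsto (fun r ↦ log γ / r) (𝓝[>] 0) atTop :=
    tendsto_inv_nhdsGT_zero.const_mul_atTop (log_pos hγ)
  have hhalf : Tendsto (fun r : ℝ ↦ r / 2) (𝓝[>] 0) (𝓝 0) :=
    ((continuous_id.div_const 2).tendsto' 0 0 (zero_div 2)).mono_left nhdsWithin_le_nhds
  have hu := tendsto_gaussQ_atTop.comp (hinv.atTop_add hhalf.neg)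
  have hv := tendsto_gaussQ_atTop.comp (hinv.atTop_add hhalf)
  convert hu.sub (hv.const_mul γ) using 2 <;> simp [thetaGamma, sub_eq_add_neg]

lemma thetaGamma_nonneg {γ r : ℝ} (hγ : 1 ≤ γ) (hr : 0 < r) : 0 ≤ thetaGamma γ r := by
  rcases hγ.eq_or_lt with rfl | hγ
  · simpa [thetaGamma, neg_div] using antitone_gaussQ (show -(r / 2) ≤ r / 2 by linarith)
  · refine le_of_tendsto (tendsto_thetaGamma_nhdsGT_zero hγ) ?_
    filter_upwards [Ioo_mem_nhdsGT hr] with s hs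
    exact (strictMonoOn_thetaGamma (by linarith)).monotoneOn hs.1 hr hs.2.le

lemma tendsto_thetaGamma_atTop (γ : ℝ) : Tendsto (thetaGamma γ) atTop (𝓝 1) := by
  have hinv : Tendsto (fun r ↦ log γ / r) atTop (𝓝 0) := tendsto_const_nhds.div_atTop tendsto_id
  have hhalf : Tendsto (fun r : ℝ ↦ r / 2) atTop atTop := tendsto_id.atTop_div_const two_pos
  have hu := tendsto_gaussQ_atBot.comp (hinv.add_atBot (tendsto_neg_atTop_atBot.comp hhalf))
  have hv := tendsto_gaussQ_atTop.comp (hinv.add_atTop hhalf)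
  convert hu.sub (hv.const_mul γ) using 2 <;> simp [thetaGamma, sub_eq_add_neg]

/-- For every fixed `γ ≥ 1`, the function `θ_γ` is nondecreasing on
`(0, ∞)`, takes values in `[0, 1]` there, and tends to `1` as `r → ∞`. -/
theorem thetaGamma_monotone_mem_tendsto (γ : ℝ) (hγ : 1 ≤ γ) :
    MonotoneOn (fun r => thetaGamma γ r) (Set.Ioi (0 : ℝ)) ∧
    (∀ r ∈ Set.Ioi (0 : ℝ), thetaGamma γ r ∈ Set.Icc (0 : ℝ) 1) ∧
    Filter.Tendsto (fun r => thetaGamma γ r) Filter.atTop (nhds 1) :=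
  ⟨(strictMonoOn_thetaGamma (by linarith)).monotoneOn,
    fun _ hr ↦ ⟨thetaGamma_nonneg hγ hr, thetaGamma_le_one (by linarith) _⟩,
    tendsto_thetaGamma_atTop γ⟩
end
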